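/- For any ideal I on ω the following are equivalent: (a) there is an I-invariant injection f : ω → ω with fix(f) ∉ I* and f[ω] ∉ I; (b) there are A, B ⊆ ω such that B ∉ I, the symmetric difference A △ B ∉ I, and I|A ⊑ I|B; (c) I is not a maximal ideal. -/

import Mathlib

open Set Filter

/-- `I` is an ideal on the countable set `X`: closed under subsets and finite
unions, contains all finite sets, and does not contain the whole set. -/
def IsIdeal {X : Type*} (I : Set (Set X)) : Prop :=
  (∀ A B : Set X, A ∈ I → B ⊆ A → B ∈ I) ∧
  (∀ A B : Set X, A ∈ I → B ∈ I → A ∪ B ∈ I) ∧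
  (∀ A : Set X, A.Finite → A ∈ I) ∧
  (Set.univ : Set X) ∉ I

/-- The restriction `I|A = {B ∩ A : B ∈ I}`. -/
def restr {X : Type*} (I : Set (Set X)) (A : Set X) : Set (Set X) :=
  {C | ∃ B ∈ I, C = B ∩ A}

/-- `I|A ≅ I|B`: there is a bijection `f : B → A` such that for every
`C ⊆ A`, `C ∈ I|A ↔ f⁻¹[C] ∈ I|B`. -/
def RIso {X : Type*} (I : Set (Set X)) (A B : Set X) : Prop :=
  ∃ f : X → X, Set.BijOn f B A ∧
    ∀ C : Set X, C ⊆ A → (C ∈ restr I A ↔ B ∩ f ⁻¹' C ∈ restr I B)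

/-- The homogeneity family `H(I) = {A : I|A ≅ I}`. -/
def HF {X : Type*} (I : Set (Set X)) : Set (Set X) := {A | RIso I A Set.univ}

/-- `I` is homogeneous if `H(I) = I⁺`. -/
def HomogIdeal {X : Type*} (I : Set (Set X)) : Prop := HF I = {A | A ∉ I}

/-- `I` is anti-homogeneous if `H(I) = I*`. -/
def AntiHomogIdeal {X : Type*} (I : Set (Set X)) : Prop := HF I = {A | Aᶜ ∈ I}

/-- `I ≅ J`: a bijection `f` of underlying sets with `A ∈ I ↔ f⁻¹[A] ∈ J`. -/
def Isomorphic {X Y : Type*} (I : Set (Set X)) (J : Set (Set Y)) : Prop :=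
  ∃ f : Y → X, Function.Bijective f ∧ ∀ A : Set X, A ∈ I ↔ f ⁻¹' A ∈ J

/-- The ideal `Fin ⊕ P(ω)` on `{0,1} × ω` (here `Bool × ℕ`, `true` playing the
role of `1`): all sets `A` with `{n : (1,n) ∈ A}` finite. -/
def FinOplusAll : Set (Set (Bool × ℕ)) := {A | {n : ℕ | (true, n) ∈ A}.Finite}

/-- An ideal on `ω` is admissible if it is not isomorphic to `Fin ⊕ P(ω)`. -/
def Admissible (I : Set (Set ℕ)) : Prop := ¬ Isomorphic I FinOplusAll

/-- An injection `f` is bi-`I`-invariant if `f[A] ∈ I ↔ A ∈ I` for all `A`. -/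
def BiInvariant {X : Type*} (I : Set (Set X)) (f : X → X) : Prop :=
  Function.Injective f ∧ ∀ A : Set X, f '' A ∈ I ↔ A ∈ I

/-- The set of fixed points of `f`. -/
def fixedSet {X : Type*} (f : X → X) : Set X := {x | f x = x}

/-- `I` is a maximal ideal. -/
def MaximalIdeal {X : Type*} (I : Set (Set X)) : Prop :=
  IsIdeal I ∧ ∀ A : Set X, A ∈ I ∨ Aᶜ ∈ I

/-- An injection `f` is `I`-invariant if `f[A] ∈ I` for all `A ∈ I`. -/
def Invariant (I : Set (Set ℕ)) (f : ℕ → ℕ) : Prop :=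
  Function.Injective f ∧ ∀ A ∈ I, f '' A ∈ I

/-- `I|A ⊑ I|B`: a bijection `f : B → A` with `f⁻¹[X] ∈ I|B` for all `X ∈ I|A`. -/
def RSub (I : Set (Set ℕ)) (A B : Set ℕ) : Prop :=
  ∃ f : ℕ → ℕ, Set.BijOn f B A ∧
    ∀ X : Set ℕ, X ⊆ A → X ∈ restr I A → B ∩ f ⁻¹' X ∈ restr I B

/-!
If `I` is maximal and `f` is `I`-invariant, split the moved points `M` of `f` by a maximal
`Y ⊆ M` with `Y ∩ f[Y] = ∅`: then `M ⊆ Y ∪ f[Y] ∪ f⁻¹[Y]`, and whichever of `Y`, `ω ∖ Y` lies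
in `I` forces `f[M] ∈ I`; as `fix(f) ∈ I`, also `f[ω] ∈ I`. So (a) and (b) fail for maximal `I`
(for (b), `I|A ⊑ I|B` with `B ∉ I` gives `A ∉ I`, and then `A △ B ⊆ Aᶜ ∪ Bᶜ ∈ I`).

Conversely, if `X, Xᶜ ∉ I`, let `f` be the identity on `X` and send the `k`-th element of
`P = Xᶜ` to the `(2k+1)`-st element of some infinite `S ⊆ P`. If `P` has an infinite subset
`S ∈ I`, use it; otherwise the small subsets of `P` are finite and `S = P` does. Either way `f`
is `I`-invariant with `fix(f)ᶜ`, `f[ω]` and `f[ω]ᶜ` outside `I`, which gives (a), and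
`A = ω`, `B = f[ω]` with `f⁻¹ : B → ω` gives (b).
-/

namespace IsIdeal

variable {X : Type*} {I : Set (Set X)} {A B : Set X}

theorem mono (hI : IsIdeal I) (hA : A ∈ I) (hBA : B ⊆ A) : B ∈ I := hI.1 A B hA hBA

theorem union_mem (hI : IsIdeal I) (hA : A ∈ I) (hB : B ∈ I) : A ∪ B ∈ I := hI.2.1 A B hA hB

theorem mem_of_finite (hI : IsIdeal I) (hA : A.Finite) : A ∈ I := hI.2.2.1 A hA

theorem infinite_of_notMem (hI : IsIdeal I) (hA : A ∉ I) : A.Infinite :=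
  fun h => hA (hI.mem_of_finite h)

theorem diff_notMem (hI : IsIdeal I) (hA : A ∉ I) (hB : B ∈ I) : A \ B ∉ I :=
  fun h => hA (hI.mono (hI.union_mem h hB) (subset_sdiff_union A B))

theorem mem_restr_iff (hI : IsIdeal I) (hBA : B ⊆ A) : B ∈ restr I A ↔ B ∈ I :=
  ⟨by rintro ⟨C, hC, rfl⟩; exact hI.mono hC inter_subset_left,
    fun hB => ⟨B, hB, (inter_eq_self_of_subset_left hBA).symm⟩⟩

end IsIdeal

theorem exists_mapsTo_compl_and_subset_union {α : Type*} (f : α → α) {M : Set α}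
    (hM : ∀ x ∈ M, f x ≠ x) :
    ∃ Y ⊆ M, MapsTo f Y Yᶜ ∧ M ⊆ Y ∪ f '' Y ∪ f ⁻¹' Y := by
  obtain ⟨Y, hY⟩ := zorn_subset {Y | Y ⊆ M ∧ MapsTo f Y Yᶜ} fun c hcS hc => by
    refine ⟨⋃₀ c, ⟨sUnion_subset fun Y hY => (hcS hY).1, ?_⟩, fun _ => subset_sUnion_of_mem⟩
    rintro y ⟨Y₁, hY₁, hy⟩ ⟨Y₂, hY₂, hfy⟩
    rcases hc.total hY₁ hY₂ with h | h
    · exact (hcS hY₂).2 (h hy) hfy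
    · exact (hcS hY₁).2 hy (h hfy)
  obtain ⟨hYM, hYf⟩ := hY.prop
  refine ⟨Y, hYM, hYf, fun x hx => ?_⟩
  by_contra hcover
  simp only [mem_union, mem_image, mem_preimage, not_or, not_exists, not_and] at hcover
  obtain ⟨⟨hxY, hxfY⟩, hfxY⟩ := hcover
  have hins : insert x Y ∈ {Y | Y ⊆ M ∧ MapsTo f Y Yᶜ} := by
    refine ⟨insert_subset hx hYM, ?_⟩
    rintro y (rfl | hy) (hfy | hfy)
    exacts [hM y hx hfy, hfxY hfy, hxfY y hy hfy, hYf hy hfy]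
  exact hxY (hY.eq_of_subset hins (subset_insert x Y) ▸ mem_insert x Y)

section Maximal

variable {I : Set (Set ℕ)} {f : ℕ → ℕ}

theorem image_mem_of_maximal (hI : IsIdeal I) (hmax : ∀ A : Set ℕ, A ∈ I ∨ Aᶜ ∈ I)
    (hinv : ∀ A ∈ I, f '' A ∈ I) {M : Set ℕ} (hM : ∀ x ∈ M, f x ≠ x) : f '' M ∈ I := by
  obtain ⟨Y, -, hYf, hcover⟩ := exists_mapsTo_compl_and_subset_union f hM
  rcases hmax Y with hY | hY
  · refine hI.mono (hI.union_mem (hI.union_mem hY (hinv _ hY)) (hinv _ (hinv _ hY))) ?_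
    rintro _ ⟨x, hx, rfl⟩
    rcases hcover hx with (hxY | ⟨y, hy, rfl⟩) | hfx
    · exact .inl (.inr (mem_image_of_mem f hxY))
    · exact .inr (mem_image_of_mem f (mem_image_of_mem f hy))
    · exact .inl (.inl hfx)
  · refine hI.mono (hI.union_mem hY (hinv _ hY)) ?_
    rintro _ ⟨x, -, rfl⟩
    by_cases hx : x ∈ Y
    · exact .inl (hYf hx)
    · exact .inr (mem_image_of_mem f hx)

theorem range_mem_of_maximal (hI : IsIdeal I) (hmax : ∀ A : Set ℕ, A ∈ I ∨ Aᶜ ∈ I)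
    (hinv : ∀ A ∈ I, f '' A ∈ I) (hfix : (fixedSet f)ᶜ ∉ I) : range f ∈ I := by
  have hF : fixedSet f ∈ I := (hmax _).resolve_right hfix
  refine hI.mono (hI.union_mem hF (image_mem_of_maximal hI hmax hinv fun x hx => hx)) ?_
  rintro _ ⟨x, rfl⟩
  by_cases hx : f x = x
  · exact .inl (congrArg f hx)
  · exact .inr ⟨x, hx, rfl⟩

theorem notMem_of_rSub (hI : IsIdeal I) {A B : Set ℕ} (hB : B ∉ I) (hAB : RSub I A B) :
    A ∉ I := by
  obtain ⟨g, hg, hpull⟩ := hAB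
  intro hA
  have hpullA := hpull A subset_rfl ((hI.mem_restr_iff subset_rfl).2 hA)
  rw [inter_eq_self_of_subset_left (show B ⊆ g ⁻¹' A from hg.mapsTo)] at hpullA
  exact hB ((hI.mem_restr_iff subset_rfl).1 hpullA)

theorem symmDiff_mem_of_maximal (hI : IsIdeal I) (hmax : ∀ A : Set ℕ, A ∈ I ∨ Aᶜ ∈ I)
    {A B : Set ℕ} (hA : A ∉ I) (hB : B ∉ I) : symmDiff A B ∈ I := by
  refine hI.mono (hI.union_mem ((hmax A).resolve_left hA) ((hmax B).resolve_left hB)) ?_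
  rintro x (⟨-, hx⟩ | ⟨-, hx⟩)
  exacts [.inr hx, .inl hx]

end Maximal

open Classical in
/-- Odd indices leave the even-indexed elements of `S` outside the range. -/
noncomputable def oddEmbed (P S : Set ℕ) : ℕ → ℕ :=
  P.piecewise (fun x => Nat.nth (· ∈ S) (2 * Nat.count (· ∈ P) x + 1)) id

section OddEmbed

variable {P S : Set ℕ} {x : ℕ}

theorem oddEmbed_of_notMem (hx : x ∉ P) : oddEmbed P S x = x := by
  classical
  exact piecewise_eq_of_notMem _ _ _ hx

open Classical in
theorem oddEmbed_of_mem (hx : x ∈ P) :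
    oddEmbed P S x = Nat.nth (· ∈ S) (2 * Nat.count (· ∈ P) x + 1) :=
  piecewise_eq_of_mem _ _ _ hx

theorem oddEmbed_mem (hS : S.Infinite) (hx : x ∈ P) : oddEmbed P S x ∈ S := by
  rw [oddEmbed_of_mem hx]
  exact Nat.nth_mem_of_infinite hS _

theorem oddEmbed_injective (hS : S.Infinite) (hSP : S ⊆ P) : Function.Injective (oddEmbed P S) := by
  classical
  intro x y hxy
  by_cases hx : x ∈ P <;> by_cases hy : y ∈ P
  · rw [oddEmbed_of_mem hx, oddEmbed_of_mem hy] at hxy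
    have hcount := Nat.nth_injective hS hxy
    exact Nat.count_injective (p := (· ∈ P)) hx hy (by omega)
  · rw [oddEmbed_of_notMem hy] at hxy
    exact absurd (hxy ▸ hSP (oddEmbed_mem hS hx)) hy
  · rw [oddEmbed_of_notMem hx] at hxy
    exact absurd (hxy ▸ hSP (oddEmbed_mem hS hy)) hx
  · rwa [oddEmbed_of_notMem hx, oddEmbed_of_notMem hy] at hxy

theorem oddEmbed_self_ne (hP : P.Infinite) (hx : x ∈ P) : oddEmbed P P x ≠ x := by
  classical
  rw [oddEmbed_of_mem hx]
  intro h
  have hcount := Nat.count_nth_of_infinite (p := (· ∈ P)) hP (2 * Nat.count (· ∈ P) x + 1)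
  rw [h] at hcount
  omega

theorem image_oddEmbed_subset (A : Set ℕ) :
    oddEmbed P S '' A ⊆ A ∪ oddEmbed P S '' (A ∩ P) := by
  rintro _ ⟨x, hxA, rfl⟩
  by_cases hx : x ∈ P
  · exact .inr ⟨x, ⟨hxA, hx⟩, rfl⟩
  · exact .inl (by rwa [oddEmbed_of_notMem hx])

theorem compl_subset_range_oddEmbed : Pᶜ ⊆ range (oddEmbed P S) :=
  fun x hx => ⟨x, oddEmbed_of_notMem hx⟩

theorem sdiff_subset_compl_range_oddEmbed (hS : S.Infinite) :
    P \ S ⊆ (range (oddEmbed P S))ᶜ := by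
  rintro _ ⟨hxP, hxS⟩ ⟨y, rfl⟩
  by_cases hy : y ∈ P
  · exact hxS (oddEmbed_mem hS hy)
  · exact hy (by rwa [oddEmbed_of_notMem hy] at hxP)

theorem nth_even_notMem_range_oddEmbed (hS : S.Infinite) (hSP : S ⊆ P) (k : ℕ) :
    Nat.nth (· ∈ S) (2 * k) ∉ range (oddEmbed P S) := by
  rintro ⟨y, hy⟩
  by_cases hyP : y ∈ P
  · rw [oddEmbed_of_mem hyP] at hy
    have := Nat.nth_injective hS hy
    omega
  · rw [oddEmbed_of_notMem hyP] at hy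
    exact hyP (hy ▸ hSP (Nat.nth_mem_of_infinite hS (2 * k)))

variable {I : Set (Set ℕ)}

theorem invariant_oddEmbed_of_mem (hI : IsIdeal I) (hS : S.Infinite) (hSP : S ⊆ P)
    (hSI : S ∈ I) : Invariant I (oddEmbed P S) := by
  refine ⟨oddEmbed_injective hS hSP, fun A hA => hI.mono (hI.union_mem hA hSI) ?_⟩
  refine (image_oddEmbed_subset A).trans (union_subset_union_right _ ?_)
  rintro _ ⟨x, ⟨-, hx⟩, rfl⟩
  exact oddEmbed_mem hS hx

theorem invariant_oddEmbed_self (hI : IsIdeal I) (hP : P.Infinite)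
    (hfin : ∀ T ⊆ P, T ∈ I → T.Finite) : Invariant I (oddEmbed P P) := by
  refine ⟨oddEmbed_injective hP subset_rfl, fun A hA => hI.mono ?_ (image_oddEmbed_subset A)⟩
  have hAP : (A ∩ P).Finite := hfin _ inter_subset_right (hI.mono hA inter_subset_left)
  exact hI.union_mem hA (hI.mem_of_finite (hAP.image _))

end OddEmbed

theorem exists_invariant_of_not_maximal {I : Set (Set ℕ)} (hI : IsIdeal I) {P : Set ℕ}
    (hP : P ∉ I) (hPc : Pᶜ ∉ I) :
    ∃ f, Invariant I f ∧ (fixedSet f)ᶜ ∉ I ∧ range f ∉ I ∧ (range f)ᶜ ∉ I := by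
  have hrange (S : Set ℕ) : range (oddEmbed P S) ∉ I :=
    fun h => hPc (hI.mono h compl_subset_range_oddEmbed)
  by_cases h : ∃ S ⊆ P, S.Infinite ∧ S ∈ I
  · obtain ⟨S, hSP, hS, hSI⟩ := h
    have hPS : P \ S ∉ I := hI.diff_notMem hP hSI
    refine ⟨oddEmbed P S, invariant_oddEmbed_of_mem hI hS hSP hSI, fun h => hPS (hI.mono h ?_),
      hrange S, fun h => hPS (hI.mono h (sdiff_subset_compl_range_oddEmbed hS))⟩
    rintro x ⟨hx, hxS⟩ hfix
    exact hxS (hfix ▸ oddEmbed_mem hS hx)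
  · push Not at h
    have hPinf : P.Infinite := hI.infinite_of_notMem hP
    have hfin (T : Set ℕ) (hT : T ⊆ P) (hTI : T ∈ I) : T.Finite :=
      by_contra fun hinf => h T hT hinf hTI
    refine ⟨oddEmbed P P, invariant_oddEmbed_self hI hPinf hfin,
      fun h => hP (hI.mono h fun x hx => oddEmbed_self_ne hPinf hx), hrange P, fun h => ?_⟩
    set E := range fun k => Nat.nth (· ∈ P) (2 * k)
    have hEP : E ⊆ P := by
      rintro _ ⟨k, rfl⟩
      exact Nat.nth_mem_of_infinite hPinf _
    have hE : E ⊆ (range (oddEmbed P P))ᶜ := by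
      rintro _ ⟨k, rfl⟩
      exact nth_even_notMem_range_oddEmbed hPinf subset_rfl k
    have hEinf : E.Infinite := infinite_range_of_injective fun k l hkl => by
      have := Nat.nth_injective hPinf hkl
      omega
    exact hEinf (hfin E hEP (hI.mono h hE))

theorem rSub_univ_range {I : Set (Set ℕ)} (hI : IsIdeal I) {f : ℕ → ℕ} (hf : Invariant I f) :
    RSub I univ (range f) := by
  obtain ⟨hinj, hinv⟩ := hf
  have hleft := Function.leftInverse_invFun hinj
  refine ⟨Function.invFun f, ⟨mapsTo_univ _ _, ?_, fun x _ => ⟨f x, mem_range_self x, hleft x⟩⟩,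
    fun A _ hA => ?_⟩
  · rintro _ ⟨a, rfl⟩ _ ⟨b, rfl⟩ h
    rw [hleft a, hleft b] at h
    rw [h]
  · have hpre : range f ∩ Function.invFun f ⁻¹' A = f '' A := by
      ext y
      constructor
      · rintro ⟨⟨a, rfl⟩, hy⟩
        exact ⟨a, by rwa [mem_preimage, hleft a] at hy, rfl⟩
      · rintro ⟨a, ha, rfl⟩
        exact ⟨mem_range_self a, by rwa [mem_preimage, hleft a]⟩
    rw [hpre, hI.mem_restr_iff (image_subset_range f A)]
    exact hinv A ((hI.mem_restr_iff (subset_univ A)).1 hA)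

/-- equivalence of (a), (b) and (c). -/
theorem stmt_13 (I : Set (Set ℕ)) (hI : IsIdeal I) :
    ((∃ f : ℕ → ℕ, Invariant I f ∧ (fixedSet f)ᶜ ∉ I ∧ Set.range f ∉ I) ↔
      (∃ A B : Set ℕ, B ∉ I ∧ symmDiff A B ∉ I ∧ RSub I A B)) ∧
    ((∃ A B : Set ℕ, B ∉ I ∧ symmDiff A B ∉ I ∧ RSub I A B) ↔
      ¬ (∀ A : Set ℕ, A ∈ I ∨ Aᶜ ∈ I)) := by
  have hac : (∃ f : ℕ → ℕ, Invariant I f ∧ (fixedSet f)ᶜ ∉ I ∧ range f ∉ I) →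
      ¬ ∀ A : Set ℕ, A ∈ I ∨ Aᶜ ∈ I :=
    fun ⟨_, hf, hfix, hrange⟩ hmax => hrange (range_mem_of_maximal hI hmax hf.2 hfix)
  have hbc : (∃ A B : Set ℕ, B ∉ I ∧ symmDiff A B ∉ I ∧ RSub I A B) →
      ¬ ∀ A : Set ℕ, A ∈ I ∨ Aᶜ ∈ I := fun ⟨_, _, hB, hAB, hsub⟩ hmax =>
    hAB (symmDiff_mem_of_maximal hI hmax (notMem_of_rSub hI hB hsub) hB)
  have hc (h : ¬ ∀ A : Set ℕ, A ∈ I ∨ Aᶜ ∈ I) :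
      ∃ f, Invariant I f ∧ (fixedSet f)ᶜ ∉ I ∧ range f ∉ I ∧ (range f)ᶜ ∉ I := by
    push Not at h
    obtain ⟨X, hX, hXc⟩ := h
    exact exists_invariant_of_not_maximal hI hXc (by rwa [compl_compl])
  have hcb (h : ¬ ∀ A : Set ℕ, A ∈ I ∨ Aᶜ ∈ I) :
      ∃ A B : Set ℕ, B ∉ I ∧ symmDiff A B ∉ I ∧ RSub I A B := by
    obtain ⟨f, hf, -, hrange, hrangec⟩ := hc h
    refine ⟨univ, range f, hrange, ?_, rSub_univ_range hI hf⟩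
    rwa [← top_eq_univ, top_symmDiff, hnot_eq_compl]
  refine ⟨⟨fun ha => hcb (hac ha), fun hb => ?_⟩, ⟨hbc, hcb⟩⟩
  obtain ⟨f, hf, hfix, hrange, -⟩ := hc (hbc hb)
  exact ⟨f, hf, hfix, hrange⟩
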